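/- Let σ ≥ 0 and α_0,…,α_σ ∈ 𝔉, and put α_{-1} = 0. Assume the chain relations (T − a·)(α_σ) = 0 and (T − a·)(α_{k-1}) + L(α_k) = 0 for all 0 ≤ k ≤ σ, and assume G_0,…,G_σ are nowhere zero. Define A_{-1} = id and A_k = (T − a_k·)∘A_{k-1} for k ≥ 0. Then for every 0 ≤ p ≤ σ one has A_p(α_{σ-p}) = 0 and G_p·A_{p-1}(α_{σ-p}) = A_p(α_{σ-p-1}). -/

import Mathlib

/-!
Semi-discrete setting: the space `𝔉` is modelled by `SDF = ℤ → ℝ → ℝ`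
(functions `φ(i,x)`, smooth in `x` for each `i`), with the shift `T`,
the inverse shift `Tinv`, the `k`-fold shift `Tz k`, and the derivative `D`.
For `g : SDF`, pointwise multiplication `g * φ` models the operator `g·`.
-/

/-- The underlying function space of `𝔉`. -/
abbrev SDF : Type := ℤ → ℝ → ℝ

namespace SDF

noncomputable section

/-- The shift operator `T(φ)(i,x) = φ(i+1,x)`. -/
def T (φ : SDF) : SDF := fun i x => φ (i + 1) x

/-- The inverse shift operator `T⁻¹(φ)(i,x) = φ(i-1,x)`. -/
def Tinv (φ : SDF) : SDF := fun i x => φ (i - 1) x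

/-- The `k`-fold shift. -/
def Tz (k : ℤ) (φ : SDF) : SDF := fun i x => φ (i + k) x

/-- The total derivative `D(φ)(i,x) = ∂φ/∂x (i,x)`. -/
def D (φ : SDF) : SDF := fun i x => deriv (φ i) x

/-- Membership in `𝔉`: infinitely differentiable in `x` for every `i`. -/
def Smooth (φ : SDF) : Prop := ∀ i : ℤ, ContDiff ℝ (⊤ : ℕ∞) (φ i)

/-- A function that is nowhere zero. -/
def NowhereZero (φ : SDF) : Prop := ∀ i x, φ i x ≠ 0

/-- The linearization operator `L = T∘D − a·D − b·T − c·`. -/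
def L (a b c : SDF) (φ : SDF) : SDF := T (D φ) - a * D φ - b * T φ - c * φ

/-- The pair `(a_k, G_k)` of the Laplace i-transformations:
`a_0 = a`, `G_0 = c + a·b − D(a)`,
`a_k = a_{k-1}·T(G_{k-1})/G_{k-1}`,
`G_k = T(G_{k-1}) − D(a_k) + a_k·(T^k(b) − T^{k-1}(b))`. -/
def aG (a b c : SDF) : ℕ → SDF × SDF
  | 0 => (a, c + a * b - D a)
  | k + 1 =>
      let ak := (aG a b c k).1 * T (aG a b c k).2 / (aG a b c k).2
      (ak, T (aG a b c k).2 - D ak + ak * (Tz ((k : ℤ) + 1) b - Tz (k : ℤ) b))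

/-- The function `a_k`. -/
def ai (a b c : SDF) (k : ℕ) : SDF := (aG a b c k).1

/-- The Laplace i-invariant `G_k`. -/
def Gi (a b c : SDF) (k : ℕ) : SDF := (aG a b c k).2

/-- The pair `(b_k, H_k)` of the Laplace x-transformations:
`b_0 = b`, `H_0 = c + a·T⁻¹(b)`,
`b_k = T⁻¹(b_{k-1}) + D(H_{k-1})/H_{k-1}`,
`H_k = H_{k-1} + a·(T⁻¹(b_k) − b_k) + D(a)`. -/
def bH (a b c : SDF) : ℕ → SDF × SDF
  | 0 => (b, c + a * Tinv b)
  | k + 1 =>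
      let bk := Tinv (bH a b c k).1 + D (bH a b c k).2 / (bH a b c k).2
      (bk, (bH a b c k).2 + a * (Tinv bk - bk) + D a)

/-- The function `b_k`. -/
def bx (a b c : SDF) (k : ℕ) : SDF := (bH a b c k).1

/-- The Laplace x-invariant `H_k`. -/
def Hx (a b c : SDF) (k : ℕ) : SDF := (bH a b c k).2

/-- The operator `L_{-k}`: `L_0 = L` and
`L_{-k} = (D − T^k(b)·)∘(T − a_k·) − G_k·` for `k ≥ 1`. -/
def Lneg (a b c : SDF) : ℕ → SDF → SDF
  | 0, φ => L a b c φ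
  | k + 1, φ =>
      D (T φ - ai a b c (k + 1) * φ)
        - Tz ((k : ℤ) + 1) b * (T φ - ai a b c (k + 1) * φ)
        - Gi a b c (k + 1) * φ

/-- The operator `L_k`, `k ≥ 1`: `L_0 = L` and
`L_k = (T − a·)∘(D − T⁻¹(b_k)·) − H_k·` for `k ≥ 1`. -/
def Lpos (a b c : SDF) : ℕ → SDF → SDF
  | 0, φ => L a b c φ
  | k + 1, φ =>
      T (D φ - Tinv (bx a b c (k + 1)) * φ)
        - a * (D φ - Tinv (bx a b c (k + 1)) * φ)
        - Hx a b c (k + 1) * φ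

/-- `Cc (k+1)` is the operator `C_k = (D − T⁻¹(b_k)·)∘C_{k-1}`; `Cc 0 = id` is `C_{-1}`. -/
def Cc (a b c : SDF) : ℕ → SDF → SDF
  | 0, φ => φ
  | k + 1, φ => D (Cc a b c k φ) - Tinv (bx a b c k) * Cc a b c k φ

/-- `Cbar k` is the operator `C̄_k`: `C̄_0 = id`, `C̄_k = (D − b_k·)∘C̄_{k-1}`. -/
def Cbar (a b c : SDF) : ℕ → SDF → SDF
  | 0, φ => φ
  | k + 1, φ => D (Cbar a b c k φ) - bx a b c (k + 1) * Cbar a b c k φ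

/-- `Aa (k+1)` is the operator `A_k = (T − a_k·)∘A_{k-1}`; `Aa 0 = id` is `A_{-1}`. -/
def Aa (a b c : SDF) : ℕ → SDF → SDF
  | 0, φ => φ
  | k + 1, φ => T (Aa a b c k φ) - ai a b c k * Aa a b c k φ

/-- `Abar k` is the operator `Ā_k`: `Ā_0 = id`, `Ā_k = (T − a_k·)∘Ā_{k-1}`. -/
def Abar (a b c : SDF) : ℕ → SDF → SDF
  | 0, φ => φ
  | k + 1, φ => T (Abar a b c k φ) - ai a b c (k + 1) * Abar a b c k φ


noncomputable section Aux

variable {a b c : SDF}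

lemma smooth_T {φ : SDF} (h : Smooth φ) : Smooth (T φ) := fun i => h (i + 1)

lemma smooth_Tz (k : ℤ) {φ : SDF} (h : Smooth φ) : Smooth (Tz k φ) := fun i => h (i + k)

lemma smooth_D {φ : SDF} (h : Smooth φ) : Smooth (D φ) := by
  intro i
  have hi := h i
  exact (contDiff_infty_iff_deriv.mp hi).2

lemma smooth_mul {φ ψ : SDF} (h1 : Smooth φ) (h2 : Smooth ψ) : Smooth (φ * ψ) :=
  fun i => (h1 i).mul (h2 i)

lemma smooth_add {φ ψ : SDF} (h1 : Smooth φ) (h2 : Smooth ψ) : Smooth (φ + ψ) :=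
  fun i => (h1 i).add (h2 i)

lemma smooth_sub {φ ψ : SDF} (h1 : Smooth φ) (h2 : Smooth ψ) : Smooth (φ - ψ) :=
  fun i => (h1 i).sub (h2 i)

lemma smooth_div {φ ψ : SDF} (h1 : Smooth φ) (h2 : Smooth ψ) (hz : NowhereZero ψ) :
    Smooth (φ / ψ) := fun i => (h1 i).div (h2 i) (fun x => hz i x)

lemma T_sub (f g : SDF) : T (f - g) = T f - T g := rfl
lemma T_mul (f g : SDF) : T (f * g) = T f * T g := rfl
lemma T_neg (f : SDF) : T (-f) = -T f := rfl
lemma T_zero : T (0 : SDF) = 0 := rfl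
lemma D_T (f : SDF) : D (T f) = T (D f) := rfl

lemma T_Tz (k : ℤ) (f : SDF) : T (Tz k f) = Tz (k + 1) f := by
  funext i x
  show f (i + 1 + k) x = f (i + (k + 1)) x
  rw [show i + 1 + k = i + (k + 1) by ring]

lemma Tz_zero (f : SDF) : Tz 0 f = f := by
  funext i x; show f (i + 0) x = f i x; rw [add_zero]

lemma D_zero : D (0 : SDF) = 0 := by
  funext i x; show deriv (fun _ => (0 : ℝ)) x = 0; simp

lemma D_sub {f g : SDF} (hf : Smooth f) (hg : Smooth g) : D (f - g) = D f - D g := by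
  funext i x
  exact deriv_fun_sub ((hf i).differentiable (by simp) x) ((hg i).differentiable (by simp) x)

lemma D_mul {f g : SDF} (hf : Smooth f) (hg : Smooth g) :
    D (f * g) = D f * g + f * D g := by
  funext i x
  exact deriv_fun_mul ((hf i).differentiable (by simp) x) ((hg i).differentiable (by simp) x)

lemma ai_zero : ai a b c 0 = a := rfl
lemma Gi_zero : Gi a b c 0 = c + a * b - D a := rfl
lemma ai_succ (k : ℕ) : ai a b c (k + 1) = ai a b c k * T (Gi a b c k) / Gi a b c k := rfl
lemma Gi_succ (k : ℕ) : Gi a b c (k + 1) =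
    T (Gi a b c k) - D (ai a b c (k + 1))
      + ai a b c (k + 1) * (Tz ((k : ℤ) + 1) b - Tz (k : ℤ) b) := rfl

lemma ai_succ_mul (k : ℕ) (hG : NowhereZero (Gi a b c k)) :
    ai a b c (k + 1) * Gi a b c k = ai a b c k * T (Gi a b c k) := by
  funext i x
  show ai a b c k i x * T (Gi a b c k) i x / Gi a b c k i x * Gi a b c k i x
    = ai a b c k i x * T (Gi a b c k) i x
  rw [div_mul_cancel₀ _ (hG i x)]

lemma smooth_aiGi (ha : Smooth a) (hb : Smooth b) (hc : Smooth c) :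
    ∀ k : ℕ, (∀ j, j < k → NowhereZero (Gi a b c j)) →
      Smooth (ai a b c k) ∧ Smooth (Gi a b c k)
  | 0, _ => ⟨ha, smooth_sub (smooth_add hc (smooth_mul ha hb)) (smooth_D ha)⟩
  | k + 1, h => by
    obtain ⟨h1, h2⟩ := smooth_aiGi ha hb hc k (fun j hj => h j (Nat.lt_succ_of_lt hj))
    have hGk : NowhereZero (Gi a b c k) := h k (Nat.lt_succ_self k)
    have hak : Smooth (ai a b c (k + 1)) := by
      rw [ai_succ]
      exact smooth_div (smooth_mul h1 (smooth_T h2)) h2 hGk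
    refine ⟨hak, ?_⟩
    rw [Gi_succ]
    exact smooth_add (smooth_sub (smooth_T h2) (smooth_D hak))
      (smooth_mul hak (smooth_sub (smooth_Tz _ hb) (smooth_Tz _ hb)))

/-- The operator `M_k = (D − T^k(b)·)∘(T − a_k·) − G_k·`. -/
def Mi (a b c : SDF) (k : ℕ) (φ : SDF) : SDF :=
  D (T φ - ai a b c k * φ) - Tz (k : ℤ) b * (T φ - ai a b c k * φ) - Gi a b c k * φ

lemma Aa_zero_op (φ : SDF) : Aa a b c 0 φ = φ := rfl

lemma Aa_zero_arg : ∀ p : ℕ, Aa a b c p 0 = 0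
  | 0 => rfl
  | p + 1 => by
    show T (Aa a b c p 0) - ai a b c p * Aa a b c p 0 = 0
    rw [Aa_zero_arg p, T_zero, mul_zero, sub_zero]

lemma smooth_Aa {φ : SDF} (hφ : Smooth φ) :
    ∀ p : ℕ, (∀ j, j < p → Smooth (ai a b c j)) → Smooth (Aa a b c p φ)
  | 0, _ => hφ
  | p + 1, h => by
    have hp := smooth_Aa hφ p (fun j hj => h j (Nat.lt_succ_of_lt hj))
    exact smooth_sub (smooth_T hp) (smooth_mul (h p (Nat.lt_succ_self p)) hp)

lemma Mi_zero_eq_L (ha : Smooth a) {φ : SDF} (hφ : Smooth φ) :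
    Mi a b c 0 φ = L a b c φ := by
  unfold Mi L
  rw [ai_zero, Gi_zero, Nat.cast_zero, Tz_zero,
    D_sub (smooth_T hφ) (smooth_mul ha hφ), D_mul ha hφ, D_T]
  ring

lemma intertwine (hb : Smooth b) (k : ℕ)
    (hG : NowhereZero (Gi a b c k))
    (hsa : Smooth (ai a b c k)) (hsa' : Smooth (ai a b c (k + 1)))
    {φ : SDF} (hφ : Smooth φ) :
    T (Mi a b c k φ) - ai a b c (k + 1) * Mi a b c k φ
      = Mi a b c (k + 1) (T φ - ai a b c k * φ) := by
  have hmul := ai_succ_mul k hG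
  have hψs : Smooth (T φ - ai a b c k * φ) :=
    smooth_sub (smooth_T hφ) (smooth_mul hsa hφ)
  have hDψ : D (T φ - ai a b c k * φ)
      = T (D φ) - (D (ai a b c k) * φ + ai a b c k * D φ) := by
    rw [D_sub (smooth_T hφ) (smooth_mul hsa hφ), D_mul hsa hφ, D_T]
  unfold Mi
  rw [Gi_succ]
  rw [D_sub (smooth_T hψs) (smooth_mul hsa' hψs), D_mul hsa' hψs, D_T, hDψ]
  simp only [Nat.cast_add, Nat.cast_one, T_sub, T_mul, T_Tz]
  linear_combination φ * hmul

end Aux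

end
/-- Let `σ ≥ 0` and `α_0, …, α_σ ∈ 𝔉` with `α_{-1} = 0`.  Assume the
chain relations `(T − a·)(α_σ) = 0` and `(T − a·)(α_{k-1}) + L(α_k) = 0` for all
`0 ≤ k ≤ σ` (the `k = 0` case reading `L(α_0) = 0`), and assume `G_0, …, G_σ` are
nowhere zero.  Then for every `0 ≤ p ≤ σ` one has `A_p(α_{σ-p}) = 0` and
`G_p·A_{p-1}(α_{σ-p}) = A_p(α_{σ-p-1})`. (Here `A_p = Aa (p+1)`, `A_{-1} = Aa 0 = id`,
and `α_{σ-p-1}` is `0` when `p = σ`.) -/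
theorem statement6 (a b c : SDF) (ha : Smooth a) (hb : Smooth b) (hc : Smooth c)
    (σ : ℕ) (α : ℕ → SDF) (hα : ∀ k, k ≤ σ → Smooth (α k))
    (htop : T (α σ) - a * α σ = 0)
    (hchain : ∀ k, 1 ≤ k → k ≤ σ → (T (α (k - 1)) - a * α (k - 1)) + L a b c (α k) = 0)
    (h0 : L a b c (α 0) = 0)
    (hG : ∀ k, k ≤ σ → NowhereZero (Gi a b c k)) :
    ∀ p, p ≤ σ →
      Aa a b c (p + 1) (α (σ - p)) = 0 ∧
      Gi a b c p * Aa a b c p (α (σ - p))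
        = Aa a b c (p + 1) (if p = σ then 0 else α (σ - p - 1)) := by
  have hsm : ∀ k, k ≤ σ → Smooth (ai a b c k) ∧ Smooth (Gi a b c k) := fun k hk =>
    smooth_aiGi ha hb hc k (fun j hj => hG j (by omega))
  -- the chain relations propagated to level `p`
  have key : ∀ p, p ≤ σ → ∀ k, k ≤ σ →
      Aa a b c (p + 1) (if k = 0 then 0 else α (k - 1))
        + Mi a b c p (Aa a b c p (α k)) = 0 := by
    intro p
    induction p with
    | zero =>
      intro _ k hk
      rw [Aa_zero_op, Mi_zero_eq_L ha (hα k hk)]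
      by_cases hk0 : k = 0
      · subst hk0
        rw [if_pos rfl, Aa_zero_arg, h0, add_zero]
      · rw [if_neg hk0]
        exact hchain k (Nat.one_le_iff_ne_zero.mpr hk0) hk
    | succ p ih =>
      intro hp k hk
      have hps : p ≤ σ := Nat.le_of_succ_le hp
      have ihk := ih hps k hk
      have hsmA : Smooth (Aa a b c p (α k)) :=
        smooth_Aa (hα k hk) p (fun j hj => (hsm j (by omega)).1)
      have step := intertwine hb p (hG p hps) (hsm p hps).1 (hsm (p + 1) hp).1 hsmA
      have h2 : Mi a b c p (Aa a b c p (α k))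
          = - Aa a b c (p + 1) (if k = 0 then 0 else α (k - 1)) :=
        eq_neg_of_add_eq_zero_right ihk
      show Aa a b c (p + 2) (if k = 0 then 0 else α (k - 1))
        + Mi a b c (p + 1) (T (Aa a b c p (α k)) - ai a b c p * Aa a b c p (α k)) = 0
      rw [← step, h2]
      set X := Aa a b c (p + 1) (if k = 0 then 0 else α (k - 1)) with hX
      show (T X - ai a b c (p + 1) * X) + (T (-X) - ai a b c (p + 1) * (-X)) = 0
      rw [T_neg]; ring
  intro p
  induction p with
  | zero =>
    intro _
    have c1 : Aa a b c (0 + 1) (α (σ - 0)) = 0 := htop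
    refine ⟨c1, ?_⟩
    have hk := key 0 (Nat.zero_le σ) σ le_rfl
    rw [Aa_zero_op] at hk
    have e : Mi a b c 0 (α σ) = - (Gi a b c 0 * α σ) := by
      unfold Mi
      rw [ai_zero, htop, D_zero]
      ring
    rw [e] at hk
    have hif : (if σ = 0 then (0 : SDF) else α (σ - 1))
        = (if 0 = σ then 0 else α (σ - 1)) := by
      by_cases h : σ = 0
      · rw [if_pos h, if_pos h.symm]
      · rw [if_neg h, if_neg (fun h' => h h'.symm)]
    rw [hif] at hk
    rw [Aa_zero_op, Nat.sub_zero]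
    linear_combination -hk
  | succ p ihp =>
    intro hp
    have hps : p ≤ σ := by omega
    obtain ⟨ih1, ih2⟩ := ihp hps
    rw [if_neg (by omega : ¬ p = σ)] at ih2
    have hσsub : σ - (p + 1) = σ - p - 1 := by omega
    have c1 : Aa a b c (p + 1 + 1) (α (σ - (p + 1))) = 0 := by
      rw [hσsub]
      show T (Aa a b c (p + 1) (α (σ - p - 1)))
        - ai a b c (p + 1) * Aa a b c (p + 1) (α (σ - p - 1)) = 0
      rw [← ih2, T_mul]
      have ih1' : T (Aa a b c p (α (σ - p)))
          - ai a b c p * Aa a b c p (α (σ - p)) = 0 := ih1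
      linear_combination T (Gi a b c p) * ih1'
        - Aa a b c p (α (σ - p)) * ai_succ_mul p (hG p hps)
    refine ⟨c1, ?_⟩
    have hk := key (p + 1) hp (σ - p - 1) (by omega)
    have c1' : T (Aa a b c (p + 1) (α (σ - p - 1)))
        - ai a b c (p + 1) * Aa a b c (p + 1) (α (σ - p - 1)) = 0 := by
      rw [hσsub] at c1; exact c1
    have e : Mi a b c (p + 1) (Aa a b c (p + 1) (α (σ - p - 1)))
        = - (Gi a b c (p + 1) * Aa a b c (p + 1) (α (σ - p - 1))) := by
      unfold Mi
      rw [c1', D_zero]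
      ring
    rw [e] at hk
    have hif : (if σ - p - 1 = 0 then (0 : SDF) else α (σ - p - 1 - 1))
        = (if p + 1 = σ then 0 else α (σ - (p + 1) - 1)) := by
      by_cases h : p + 1 = σ
      · rw [if_pos (by omega), if_pos h]
      · rw [if_neg (by omega), if_neg h]
        have : σ - p - 1 - 1 = σ - (p + 1) - 1 := by omega
        rw [this]
    rw [hif] at hk
    rw [hσsub]
    rw [show σ - p - 1 = σ - (p + 1) from hσsub.symm] at hk ⊢
    linear_combination -hk

end SDF
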